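/- Let k ≤ l be integers and let S be a finite interval of integers containing {2k−1, 2k, …, 2l+1}. Then the Nicolai supercharge is nilpotent: Q[k,l] Q[k,l] = 0, and consequently Q[k,l]* Q[k,l]* = 0. -/

import Mathlib

namespace Nicolai

/-- Configurations on the finite interval `S = {a, …, b}` of integers:
`true` = occupied, `false` = empty. -/
abbrev Config (a b : ℤ) : Type := {i : ℤ // i ∈ Finset.Icc a b} → Bool

/-- The Hilbert space `ℋ_S` with orthonormal basis indexed by configurations. -/
abbrev Hs (a b : ℤ) : Type := EuclideanSpace ℂ (Config a b)

/-- The basis vector `e_g` associated to the configuration `g`. -/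
noncomputable def e (a b : ℤ) (g : Config a b) : Hs a b := EuclideanSpace.single g 1

/-- The Jordan–Wigner sign exponent: the number of occupied sites strictly to the left of `i`. -/
noncomputable def signCount (a b : ℤ) (g : Config a b) (i : ℤ) : ℕ :=
  (Finset.univ.filter fun j : {x : ℤ // x ∈ Finset.Icc a b} => j.1 < i ∧ g j = true).card

/-- The annihilation operator `c_i` (zero if `i ∉ S`). -/
noncomputable def cAnn (a b : ℤ) (i : ℤ) : Module.End ℂ (Hs a b) where
  toFun ψ := WithLp.toLp 2 fun g =>
    if hi : i ∈ Finset.Icc a b then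
      if g ⟨i, hi⟩ = false then
        ((-1 : ℂ) ^ signCount a b g i) * ψ (Function.update g ⟨i, hi⟩ true)
      else 0
    else 0
  map_add' ψ φ := by
    ext g
    simp only [PiLp.add_apply, PiLp.toLp_apply]
    split_ifs <;> simp [mul_add]
  map_smul' c ψ := by
    ext g
    simp only [PiLp.toLp_apply, PiLp.smul_apply, smul_eq_mul, RingHom.id_apply]
    split_ifs <;> ring

/-- The creation operator `c*_i` (zero if `i ∉ S`). -/
noncomputable def cCr (a b : ℤ) (i : ℤ) : Module.End ℂ (Hs a b) where
  toFun ψ := WithLp.toLp 2 fun g =>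
    if hi : i ∈ Finset.Icc a b then
      if g ⟨i, hi⟩ = true then
        ((-1 : ℂ) ^ signCount a b g i) * ψ (Function.update g ⟨i, hi⟩ false)
      else 0
    else 0
  map_add' ψ φ := by
    ext g
    simp only [PiLp.add_apply, PiLp.toLp_apply]
    split_ifs <;> simp [mul_add]
  map_smul' c ψ := by
    ext g
    simp only [PiLp.toLp_apply, PiLp.smul_apply, smul_eq_mul, RingHom.id_apply]
    split_ifs <;> ring

/-- `q_{2i} = c_{2i+1} c*_{2i} c_{2i−1}`. -/
noncomputable def qOp (a b i : ℤ) : Module.End ℂ (Hs a b) :=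
  cAnn a b (2 * i + 1) * cCr a b (2 * i) * cAnn a b (2 * i - 1)

/-- The Nicolai supercharge `Q[k,l] = Σ_{i=k}^{l} q_{2i}`. -/
noncomputable def QNic (a b k l : ℤ) : Module.End ℂ (Hs a b) :=
  ∑ i ∈ Finset.Icc k l, qOp a b i

/-- Membership in `Ξ̂_{k,l}`: a `{−1,+1}`-valued function on `{2k, …, 2l}` with no
forbidden sign triplet at interior even sites, constant on each two-site edge. -/
def memXi (k l : ℤ) (f : ℤ → ℤ) : Prop :=
  (∀ i ∈ Finset.Icc (2 * k) (2 * l), f i = 1 ∨ f i = -1) ∧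
  (∀ i : ℤ, k < i → i < l →
    ¬(f (2 * i - 1) = -1 ∧ f (2 * i) = 1 ∧ f (2 * i + 1) = -1) ∧
    ¬(f (2 * i - 1) = 1 ∧ f (2 * i) = -1 ∧ f (2 * i + 1) = 1)) ∧
  f (2 * k) = f (2 * k + 1) ∧ f (2 * l - 1) = f (2 * l)

/-- `ζ_i(+1) = c*_i`, `ζ_i(−1) = c_i`. -/
noncomputable def zeta (a b i : ℤ) (v : ℤ) : Module.End ℂ (Hs a b) :=
  if v = 1 then cCr a b i else if v = -1 then cAnn a b i else 0

/-- The local fermion operator `Q(f) = ζ_{2k}(f(2k)) ζ_{2k+1}(f(2k+1)) ⋯ ζ_{2l}(f(2l))`,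
the product taken in increasing site order. -/
noncomputable def QF (a b k l : ℤ) (f : ℤ → ℤ) : Module.End ℂ (Hs a b) :=
  ((List.range (2 * l - 2 * k + 1).toNat).map
    (fun j => zeta a b (2 * k + (j : ℤ)) (f (2 * k + (j : ℤ))))).prod

/-- `g` has a forbidden triplet at the even site `2i`. -/
def forbiddenAt (g : ℤ → Bool) (i : ℤ) : Prop :=
  (g (2 * i - 1) = false ∧ g (2 * i) = true ∧ g (2 * i + 1) = false) ∨
  (g (2 * i - 1) = true ∧ g (2 * i) = false ∧ g (2 * i + 1) = true)

/-- Membership in `Υ̂_{k,l}`: no forbidden triplet at interior even sites and the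
open SUSY boundary condition (only the values on `{2k, …, 2l}` are relevant). -/
def memUps (k l : ℤ) (g : ℤ → Bool) : Prop :=
  (∀ i : ℤ, k < i → i < l → ¬ forbiddenAt g i) ∧
  g (2 * k) = g (2 * k + 1) ∧ g (2 * l - 1) = g (2 * l)

/-- Extend a configuration on `S` to all of `ℤ` by `false`. -/
noncomputable def ext (a b : ℤ) (g : Config a b) : ℤ → Bool :=
  fun i => if h : i ∈ Finset.Icc a b then g ⟨i, h⟩ else false

/-- The charge `f ∈ Ξ̂_{k,l}` is applicable to the configuration `g`. -/
def applicable (k l : ℤ) (f : ℤ → ℤ) (g : ℤ → Bool) : Prop :=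
  ∀ i : ℤ, 2 * k ≤ i → i ≤ 2 * l → (f i = 1 → g i = false) ∧ (f i = -1 → g i = true)

/-- The configuration `f·g` resulting from the action of the charge `f ∈ Ξ̂_{k,l}` on `g`. -/
def applyCharge (k l : ℤ) (f : ℤ → ℤ) (g : ℤ → Bool) : ℤ → Bool :=
  fun i => if 2 * k ≤ i ∧ i ≤ 2 * l then decide (f i = 1) else g i

/-- `Reachable p q g₀ g`: `g` is obtained from `g₀` by finitely many applications of
applicable charges from `Ξ̂(p,q) = ⋃_{p ≤ k < l ≤ q} Ξ̂_{k,l}`. -/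
inductive Reachable (p q : ℤ) : (ℤ → Bool) → (ℤ → Bool) → Prop
  | refl (g : ℤ → Bool) : Reachable p q g g
  | step {g₀ g : ℤ → Bool} (k l : ℤ) (f : ℤ → ℤ) :
      Reachable p q g₀ g → p ≤ k → k < l → l ≤ q → memXi k l f → applicable k l f g →
      Reachable p q g₀ (applyCharge k l f g)

/-- The fermion parity operator `P e_g = (−1)^{#occupied sites} e_g`. -/
noncomputable def parity (a b : ℤ) : Module.End ℂ (Hs a b) where
  toFun ψ := WithLp.toLp 2 fun g =>
    ((-1 : ℂ) ^ (Finset.univ.filter fun j : {x : ℤ // x ∈ Finset.Icc a b} => g j = true).card)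
      * ψ g
  map_add' ψ φ := by
    ext g
    simp only [PiLp.add_apply, PiLp.toLp_apply]
    ring
  map_smul' c ψ := by
    ext g
    simp only [PiLp.toLp_apply, PiLp.smul_apply, smul_eq_mul, RingHom.id_apply]
    ring

/-!
Each `q_{2i}` is a product of three Jordan–Wigner operators at distinct sites, and such operators
anticommute at distinct sites and square to zero at one site. Hence `q_{2i}` squares to zero,
`q_{2i}` and `q_{2j}` anticommute when `|i - j| ≥ 2` (an odd number, nine, of transpositions),
and for `|i - j| = 1` both products `q_{2i} q_{2j}` and `q_{2j} q_{2i}` vanish because the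
shared site `2i + 1` carries an annihilator in both factors. In all cases
`q_{2i} q_{2j} + q_{2j} q_{2i} = 0`, so the cross terms of `Q[k,l]²` cancel in pairs.
Finally `(Q*)² = (Q²)* = 0`.
-/

end Nicolai

section Anticommute

variable {R : Type*} [NonUnitalRing R] {x y z w : R}

def Anticommute (x y : R) : Prop := x * y = -(y * x)

theorem Anticommute.symm (h : Anticommute x y) : Anticommute y x := by
  rw [Anticommute, h, neg_neg]

theorem Anticommute.add_eq_zero (h : Anticommute x y) : x * y + y * x = 0 := by
  rw [h, neg_add_cancel]

theorem Anticommute.commute_mul (hy : Anticommute x y) (hz : Anticommute x z) :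
    Commute x (y * z) := by
  calc x * (y * z) = -(y * (x * z)) := by rw [← mul_assoc, hy, neg_mul, mul_assoc]
    _ = y * z * x := by rw [hz, mul_neg, neg_neg, mul_assoc]

theorem Commute.mul_anticommute (hy : Commute x y) (hz : Anticommute x z) :
    Anticommute x (y * z) := by
  rw [Anticommute, ← mul_assoc, hy.eq, mul_assoc, hz, mul_neg, mul_assoc]

theorem Anticommute.mul_right₃ {y₁ y₂ y₃ : R} (h₁ : Anticommute x y₁) (h₂ : Anticommute x y₂)
    (h₃ : Anticommute x y₃) : Anticommute x (y₁ * y₂ * y₃) :=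
  (h₁.commute_mul h₂).mul_anticommute h₃

theorem Anticommute.mul_left₃ {y₁ y₂ y₃ : R} (h₁ : Anticommute y₁ x) (h₂ : Anticommute y₂ x)
    (h₃ : Anticommute y₃ x) : Anticommute (y₁ * y₂ * y₃) x :=
  (Anticommute.mul_right₃ h₁.symm h₂.symm h₃.symm).symm

theorem mul_mul_self_eq_zero_of_commute (h : Commute x w) (hx : x * x = 0) : x * w * x = 0 := by
  rw [h.eq, mul_assoc, hx, mul_zero]

theorem sum_mul_sum_self_eq_zero {ι : Type*} (s : Finset ι) (f : ι → R)
    (hsq : ∀ i ∈ s, f i * f i = 0) (hanti : ∀ i ∈ s, ∀ j ∈ s, f i * f j + f j * f i = 0) :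
    (∑ i ∈ s, f i) * (∑ i ∈ s, f i) = 0 := by
  classical
  induction s using Finset.induction_on with
  | empty => simp
  | insert j s hj ih =>
    have hcross : (∑ i ∈ s, f i) * f j + f j * (∑ i ∈ s, f i) = 0 := by
      rw [Finset.sum_mul, Finset.mul_sum, ← Finset.sum_add_distrib]
      exact Finset.sum_eq_zero fun i hi =>
        hanti i (Finset.mem_insert_of_mem hi) j (Finset.mem_insert_self j s)
    rw [Finset.sum_insert hj, add_mul, mul_add, mul_add,
      ih (fun i hi => hsq i (Finset.mem_insert_of_mem hi))
        (fun i hi j hj => hanti i (Finset.mem_insert_of_mem hi) j (Finset.mem_insert_of_mem hj)),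
      hsq j (Finset.mem_insert_self j s), add_zero, zero_add, add_comm, hcross]

end Anticommute

namespace Nicolai

section SignCount

variable {a b : ℤ} (g : Config a b) (j : {x : ℤ // x ∈ Finset.Icc a b}) {i : ℤ}

theorem signCount_update_of_le (v : Bool) (h : i ≤ j.1) :
    signCount a b (Function.update g j v) i = signCount a b g i := by
  unfold signCount
  congr 1
  refine Finset.filter_congr fun x _ => ?_
  by_cases hx : x.1 < i
  · have hxj : x ≠ j := by rintro rfl; omega
    simp [Function.update_of_ne hxj]
  · simp [hx]

theorem signCount_update_true_of_lt (h : j.1 < i) (hg : g j = false) :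
    signCount a b (Function.update g j true) i = signCount a b g i + 1 := by
  unfold signCount
  rw [← Finset.card_insert_of_notMem (s := Finset.univ.filter _) (a := j) (by simp [hg])]
  congr 1
  ext x
  by_cases hxj : x = j
  · subst hxj; simp [h]
  · simp [hxj]

theorem neg_one_pow_signCount_update_of_lt {v : Bool} (h : j.1 < i) (hg : g j = !v) :
    (-1 : ℂ) ^ signCount a b (Function.update g j v) i = -(-1 : ℂ) ^ signCount a b g i := by
  cases v
  · have hg' : g = Function.update (Function.update g j false) j true := by
      rw [Function.update_idem, ← (by simpa using hg : g j = true), Function.update_eq_self]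
    conv_rhs => rw [hg', signCount_update_true_of_lt _ j h (Function.update_self ..)]
    rw [pow_succ, mul_neg_one, neg_neg]
  · rw [signCount_update_true_of_lt g j h (by simpa using hg), pow_succ, mul_neg_one]

end SignCount

section Fermion

variable {a b : ℤ}

/-- `fermionOp a b i true = c_i` and `fermionOp a b i false = c*_i`: in both cases the
operator reads the coefficient of the configuration with site `i` set to `u`. -/
noncomputable def fermionOp (a b i : ℤ) (u : Bool) : Module.End ℂ (Hs a b) :=
  if u then cAnn a b i else cCr a b i

theorem fermionOp_apply (i : ℤ) (u : Bool) (ψ : Hs a b) (g : Config a b) :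
    fermionOp a b i u ψ g = if hi : i ∈ Finset.Icc a b then
      if g ⟨i, hi⟩ = !u then
        (-1 : ℂ) ^ signCount a b g i * ψ (Function.update g ⟨i, hi⟩ u)
      else 0
    else 0 := by
  cases u <;> rfl

theorem fermionOp_mul_self (i : ℤ) (u : Bool) : fermionOp a b i u * fermionOp a b i u = 0 := by
  ext ψ g
  simp only [Module.End.mul_apply, fermionOp_apply, LinearMap.zero_apply]
  split_ifs <;> simp_all

theorem fermionOp_anticommute {i j : ℤ} (hne : i ≠ j) (u v : Bool) :
    Anticommute (fermionOp a b i u) (fermionOp a b j v) := by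
  ext ψ g
  simp only [Module.End.mul_apply, LinearMap.neg_apply, PiLp.neg_apply, fermionOp_apply]
  by_cases hi : i ∈ Finset.Icc a b
  swap; · simp [hi]
  by_cases hj : j ∈ Finset.Icc a b
  swap; · simp [hj]
  have hij : (⟨i, hi⟩ : {x : ℤ // x ∈ Finset.Icc a b}) ≠ ⟨j, hj⟩ := by simpa using hne
  simp only [dif_pos hi, dif_pos hj, Function.update_of_ne hij, Function.update_of_ne hij.symm]
  by_cases hgi : g ⟨i, hi⟩ = !u
  swap; · simp [hgi]
  by_cases hgj : g ⟨j, hj⟩ = !v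
  swap; · simp [hgj]
  rw [if_pos hgi, if_pos hgj, if_pos hgj, if_pos hgi, Function.update_comm hij]
  -- only the operator at the larger site sees the occupation change at the smaller one
  rcases hne.lt_or_gt with hlt | hlt
  · rw [neg_one_pow_signCount_update_of_lt g ⟨i, hi⟩ hlt hgi,
      signCount_update_of_le g ⟨j, hj⟩ v hlt.le]
    ring
  · rw [neg_one_pow_signCount_update_of_lt g ⟨j, hj⟩ hlt hgj,
      signCount_update_of_le g ⟨i, hi⟩ u hlt.le]
    ring

end Fermion

section Supercharge

variable {a b : ℤ}

theorem qOp_eq_fermionOp (i : ℤ) : qOp a b i =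
    fermionOp a b (2 * i + 1) true * fermionOp a b (2 * i) false *
      fermionOp a b (2 * i - 1) true :=
  rfl

theorem qOp_mul_self (i : ℤ) : qOp a b i * qOp a b i = 0 := by
  set x := fermionOp a b (2 * i + 1) true
  have hc : Commute x (fermionOp a b (2 * i) false * fermionOp a b (2 * i - 1) true) :=
    (fermionOp_anticommute (by omega) _ _).commute_mul (fermionOp_anticommute (by omega) _ _)
  calc qOp a b i * qOp a b i
      = x * (fermionOp a b (2 * i) false * fermionOp a b (2 * i - 1) true) * x *
          (fermionOp a b (2 * i) false * fermionOp a b (2 * i - 1) true) := by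
        rw [qOp_eq_fermionOp]
        simp only [mul_assoc]
        rfl
    _ = 0 := by rw [mul_mul_self_eq_zero_of_commute hc (fermionOp_mul_self _ _), zero_mul]

theorem qOp_mul_qOp_succ (i : ℤ) : qOp a b i * qOp a b (i + 1) = 0 := by
  set x := fermionOp a b (2 * i + 1) true
  have hc : Commute x (fermionOp a b (2 * i) false * fermionOp a b (2 * i - 1) true *
      (fermionOp a b (2 * i + 3) true * fermionOp a b (2 * i + 2) false)) :=
    ((fermionOp_anticommute (by omega) _ _).commute_mul
        (fermionOp_anticommute (by omega) _ _)).mul_right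
      ((fermionOp_anticommute (by omega) _ _).commute_mul
        (fermionOp_anticommute (by omega) _ _))
  calc qOp a b i * qOp a b (i + 1)
      = x * (fermionOp a b (2 * i) false * fermionOp a b (2 * i - 1) true *
          (fermionOp a b (2 * i + 3) true * fermionOp a b (2 * i + 2) false)) * x := by
        rw [qOp_eq_fermionOp, qOp_eq_fermionOp, show 2 * (i + 1) - 1 = 2 * i + 1 by ring,
          show 2 * (i + 1) + 1 = 2 * i + 3 by ring, show 2 * (i + 1) = 2 * i + 2 by ring]
        simp only [mul_assoc]
        rfl
    _ = 0 := mul_mul_self_eq_zero_of_commute hc (fermionOp_mul_self _ _)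

theorem qOp_succ_mul_qOp (i : ℤ) : qOp a b (i + 1) * qOp a b i = 0 := by
  rw [qOp_eq_fermionOp i, qOp_eq_fermionOp (i + 1), show 2 * (i + 1) - 1 = 2 * i + 1 by ring]
  simp only [mul_assoc]
  rw [← mul_assoc (fermionOp a b _ true) (fermionOp a b _ true), fermionOp_mul_self]
  simp

theorem qOp_anticommute_of_two_le {i j : ℤ} (hij : 2 ≤ |i - j|) :
    Anticommute (qOp a b i) (qOp a b j) := by
  rw [le_abs] at hij
  rw [qOp_eq_fermionOp i, qOp_eq_fermionOp j]
  refine .mul_left₃ ?_ ?_ ?_ <;>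
    exact .mul_right₃ (fermionOp_anticommute (by omega) _ _)
      (fermionOp_anticommute (by omega) _ _) (fermionOp_anticommute (by omega) _ _)

theorem qOp_mul_add_mul_eq_zero (i j : ℤ) :
    qOp a b i * qOp a b j + qOp a b j * qOp a b i = 0 := by
  rcases (by omega : j = i ∨ j = i + 1 ∨ i = j + 1 ∨ 2 ≤ i - j ∨ 2 ≤ -(i - j))
    with rfl | rfl | rfl | hij
  · rw [qOp_mul_self, add_zero]
  · rw [qOp_mul_qOp_succ, qOp_succ_mul_qOp, add_zero]
  · rw [qOp_mul_qOp_succ, qOp_succ_mul_qOp, add_zero]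
  · exact (qOp_anticommute_of_two_le (le_abs.2 hij)).add_eq_zero

theorem QNic_mul_self (k l : ℤ) : QNic a b k l * QNic a b k l = 0 :=
  sum_mul_sum_self_eq_zero _ _ (fun i _ => qOp_mul_self i)
    (fun i _ j _ => qOp_mul_add_mul_eq_zero i j)

end Supercharge

theorem nicolai_supercharge_nilpotent_general (a b k l : ℤ) :
    QNic a b k l * QNic a b k l = 0 ∧
    LinearMap.adjoint (QNic a b k l) * LinearMap.adjoint (QNic a b k l) = 0 := by
  refine ⟨QNic_mul_self k l, ?_⟩
  rw [← LinearMap.star_eq_adjoint, ← star_mul, QNic_mul_self, star_zero]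

/-- the Nicolai supercharge is nilpotent, and so is its adjoint. -/
theorem nicolai_supercharge_nilpotent (a b k l : ℤ) (hkl : k ≤ l)
    (hS : Finset.Icc (2 * k - 1) (2 * l + 1) ⊆ Finset.Icc a b) :
    QNic a b k l * QNic a b k l = 0 ∧
    LinearMap.adjoint (QNic a b k l) * LinearMap.adjoint (QNic a b k l) = 0 :=
  nicolai_supercharge_nilpotent_general a b k l

end Nicolai
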